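/- Let T be a strongly synchronizing core transducer over X_n satisfying the Lipschitz condition SL3. Then for all states q, p of T and all finite words Γ, Δ with π_T(Γ, q) = p and π_T(Δ, q) = p, one has |λ_T(Γ, q)| − |Γ| = |λ_T(Δ, q)| − |Δ|; that is, the 'lag' along a path depends only on its endpoints. -/
import Mathlib


/-!
Common definitions: transducers over a finite alphabet, strong synchronization,
cores, ω-equivalence, minimal representatives, the monoids `M_n`, `SL_n`, `SO_n`,
the groups `O_n`, `L_n`, annotations, and the two-sided full shift.

Throughout, the alphabet is `Fin (n + 2)`, i.e. an alphabet of size `n + 2 ≥ 2`.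
-/

namespace ShiftPaper

/-- The alphabet with `n + 2` letters. -/
abbrev A (n : ℕ) : Type := Fin (n + 2)

/-- Finite words over the alphabet. -/
abbrev Word (n : ℕ) : Type := List (A n)

/-- A transducer over the alphabet `A n`: a finite nonempty set of states together with a
transition function `tr` and an output function `out` (possibly asynchronous). -/
structure Transducer (n : ℕ) where
  Q : Type
  fin : Finite Q
  ne : Nonempty Q
  tr : A n → Q → Q
  out : A n → Q → Word n

variable {n : ℕ}

instance (T : Transducer n) : Finite T.Q := T.fin
instance (T : Transducer n) : Nonempty T.Q := T.ne

/-- Extended transition function, reading a finite word from left to right. -/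
def dsts (T : Transducer n) : Word n → T.Q → T.Q
  | [], q => q
  | a :: w, q => dsts T w (T.tr a q)

/-- Extended output function along a finite word. -/
def outs (T : Transducer n) : Word n → T.Q → Word n
  | [], _ => []
  | a :: w, q => T.out a q ++ outs T w (T.tr a q)

/-- Every (nonempty) circuit in the transducer has nonempty output. -/
def CircuitsNonempty (T : Transducer n) : Prop :=
  ∀ (q : T.Q) (w : Word n), w ≠ [] → dsts T w q = q → outs T w q ≠ []

/-- `T` is synchronizing at level `k`: the state reached after reading any word of
length `k` does not depend on the starting state. -/
def SyncAt (T : Transducer n) (k : ℕ) : Prop :=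
  ∀ w : Word n, w.length = k → ∀ p q : T.Q, dsts T w p = dsts T w q

/-- `T` is strongly synchronizing: synchronizing at some level. -/
def StronglySync (T : Transducer n) : Prop := ∃ k, SyncAt T k

/-- The minimal synchronizing level (junk value `0` if `T` is not strongly synchronizing). -/
noncomputable def syncLevel (T : Transducer n) : ℕ := by
  classical
  exact if h : StronglySync T then Nat.find h else 0

/-- The infinite output stream produced from state `q` on reading the infinite input `x`
(the map `h_q`).  (Well defined on transducers all of whose circuits have nonempty
output; junk values otherwise.) -/
noncomputable def hmap (T : Transducer n) (q : T.Q) (x : ℕ → A n) : ℕ → A n := fun m => by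
  classical
  exact if h : ∃ k, m < (outs T ((List.range k).map x) q).length then
    (outs T ((List.range h.choose).map x) q).getD m default
  else default

/-- ω-equality of transducers: a bijection of the state sets under which corresponding
states induce the same maps on infinite sequences. -/
def OmegaEq (T U : Transducer n) : Prop :=
  ∃ f : T.Q ≃ U.Q, ∀ q, hmap T q = hmap U (f q)

/-- The setoid on states given by ω-equivalence of states. -/
def omegaSetoid (T : Transducer n) : Setoid T.Q :=
  ⟨fun p q => hmap T p = hmap T q, ⟨fun _ => rfl, fun h => h.symm, fun h h' => h.trans h'⟩⟩

/-- The transducer obtained by identifying ω-equivalent states. -/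
noncomputable def quotT (T : Transducer n) : Transducer n where
  Q := Quotient (omegaSetoid T)
  fin := Finite.of_surjective (Quotient.mk (omegaSetoid T))
    fun c => ⟨Quotient.out c, Quotient.out_eq c⟩
  ne := ⟨Quotient.mk (omegaSetoid T) (Classical.choice T.ne)⟩
  tr := fun a c => Quotient.mk (omegaSetoid T) (T.tr a (Quotient.out c))
  out := fun a c => T.out a (Quotient.out c)

/-- `q` is a state of the core of `T`: it is forced by some word whose length is a
synchronizing level of `T`. -/
def CoreState (T : Transducer n) (q : T.Q) : Prop :=
  ∃ (k : ℕ) (w : Word n), SyncAt T k ∧ w.length = k ∧ ∀ p, dsts T w p = q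

/-- `T` is core: it equals its core. -/
def IsCore (T : Transducer n) : Prop := ∀ q : T.Q, CoreState T q

/-- Auxiliary predicate used to make the core construction total. -/
def CoreStateE (T : Transducer n) (q : T.Q) : Prop :=
  CoreState T q ∨ ∀ p, ¬ CoreState T p

/-- The core of `T` (as a transducer). -/
noncomputable def coreT (T : Transducer n) : Transducer n where
  Q := {q : T.Q // CoreStateE T q}
  fin := Subtype.finite
  ne := by
    classical
    by_cases h : ∀ p, ¬ CoreState T p
    · exact ⟨⟨Classical.choice T.ne, Or.inr h⟩⟩
    · push_neg at h
      obtain ⟨p, hp⟩ := h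
      exact ⟨⟨p, Or.inl hp⟩⟩
  tr := fun a q => by
    classical
    exact if h : CoreStateE T (T.tr a q.1) then ⟨T.tr a q.1, h⟩ else q
  out := fun a q => T.out a q.1

/-- There exist two inputs whose outputs from `q` disagree at position `j`. -/
def Disagree (T : Transducer n) (q : T.Q) (j : ℕ) : Prop :=
  ∃ x y : ℕ → A n, hmap T q x j ≠ hmap T q y j

/-- The extent of incomplete response of `q` (the length of `Λ(ε,q)`) is finite. -/
def FiniteExtent (T : Transducer n) (q : T.Q) : Prop := ∃ j, Disagree T q j

/-- The extent of incomplete response `|Λ(ε,q)|` of the state `q`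
(junk value `0` when it is infinite). -/
noncomputable def extentLen (T : Transducer n) (q : T.Q) : ℕ := by
  classical
  exact if h : FiniteExtent T q then Nat.find h else 0

/-- The word `Λ(ε,q)`: the greatest common prefix of all outputs from `q`. -/
noncomputable def extentWord (T : Transducer n) (q : T.Q) : Word n :=
  (List.range (extentLen T q)).map (hmap T q fun _ => default)

/-- `T` has no states of incomplete response (`Λ(ε,q) = ε` for every state `q`). -/
def NoIncomplete (T : Transducer n) : Prop := ∀ q : T.Q, Disagree T q 0

/-- No two distinct states of `T` are ω-equivalent. -/
def WeaklyMinimal (T : Transducer n) : Prop :=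
  ∀ p q : T.Q, hmap T p = hmap T q → p = q

/-- The Lipschitz condition (SL3): around any circuit the output is as long as the input. -/
def SL3 (T : Transducer n) : Prop :=
  ∀ (q : T.Q) (Γ : Word n), dsts T Γ q = q → (outs T Γ q).length = Γ.length

/-- `T` is synchronous: it writes exactly one letter for each letter read. -/
def Synchronous (T : Transducer n) : Prop :=
  ∀ (a : A n) (q : T.Q), (T.out a q).length = 1

/-- Boolean lexicographic comparison of words. -/
def lexLtB : Word n → Word n → Bool
  | [], [] => false
  | [], _ :: _ => true
  | _ :: _, [] => false
  | a :: u, b :: v => if a < b then true else if b < a then false else lexLtB u v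

/-- The lexicographically least rotation of a word. -/
def minimalRot (w : Word n) : Word n :=
  ((List.range w.length).map fun i => w.rotate i).foldl
    (fun acc r => if lexLtB r acc then r else acc) w

/-- A nonempty word is prime if it is not a power of a strictly shorter word. -/
def IsPrime (w : Word n) : Prop :=
  w ≠ [] ∧ ∀ (u : Word n) (k : ℕ), w = (List.replicate k u).flatten → w.length ≤ u.length

/-- `v` is a rotation of `u`. -/
def RotEq (u v : Word n) : Prop := ∃ i : ℕ, v = u.rotate i

/-- The prime word of which the (eventually constant single) image point of `T` is a power
(used for the degenerate transducers `Z_x`; junk values otherwise). -/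
noncomputable def periodicRoot (T : Transducer n) : Word n := by
  classical
  exact
    if hp : ∃ m, 0 < m ∧ ∀ j, hmap T (Classical.choice T.ne) (fun _ => default) (j + m) =
        hmap T (Classical.choice T.ne) (fun _ => default) j
    then (List.range (Nat.find hp)).map (hmap T (Classical.choice T.ne) fun _ => default)
    else [default]

/-- Remove the incomplete response from the states of `T`: replace the output `λ(a,q)` by
`Λ(a,q) - Λ(ε,q)`.  (In the degenerate case where the extents of incomplete response are
infinite, all outputs are replaced by the minimal rotation of the prime root of the unique
image point, so that minimising produces the transducer `Z_x` of the paper.) -/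
noncomputable def removeIncomplete (T : Transducer n) : Transducer n where
  Q := T.Q
  fin := T.fin
  ne := T.ne
  tr := T.tr
  out := fun a q => by
    classical
    exact if ∀ p : T.Q, FiniteExtent T p then
      (T.out a q ++ extentWord T (T.tr a q)).drop (extentLen T q)
    else minimalRot (periodicRoot T)

/-- The minimal representative `[T]` of a strongly synchronizing core transducer `T`:
remove incomplete response, take the core, and identify ω-equivalent states. -/
noncomputable def minRep (T : Transducer n) : Transducer n :=
  quotT (coreT (removeIncomplete T))

/-- The single state transducer `Z_x` which outputs `x` on every input letter. -/
def Zword (x : Word n) : Transducer n where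
  Q := PUnit
  fin := inferInstance
  ne := ⟨PUnit.unit⟩
  tr := fun _ q => q
  out := fun _ _ => x

/-- The single state identity transducer. -/
def oneT : Transducer n where
  Q := PUnit
  fin := inferInstance
  ne := ⟨PUnit.unit⟩
  tr := fun _ q => q
  out := fun a _ => [a]

/-- The product transducer `T * U`: the outputs of `T` are processed by `U`. -/
noncomputable def prodT (T U : Transducer n) : Transducer n where
  Q := T.Q × U.Q
  fin := inferInstance
  ne := ⟨⟨Classical.choice T.ne, Classical.choice U.ne⟩⟩
  tr := fun a p => (T.tr a p.1, dsts U (T.out a p.1) p.2)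
  out := fun a p => outs U (T.out a p.1) p.2

/-- The product in `M_n`: the minimal representative of the core of `T * U`. -/
noncomputable def mulT (T U : Transducer n) : Transducer n :=
  minRep (coreT (prodT T U))

/-- Membership in the monoid `M_n` of minimal, strongly synchronizing, core transducers
(a transducer is minimal if it is core, has no states of incomplete response and no two
distinct ω-equivalent states, or it is one of the degenerate transducers `Z_x` for a prime
word `x` which is least in its rotation class). -/
def MnMem (T : Transducer n) : Prop :=
  CircuitsNonempty T ∧ StronglySync T ∧ IsCore T ∧
    ((NoIncomplete T ∧ WeaklyMinimal T) ∨
      ∃ x : Word n, IsPrime x ∧ minimalRot x = x ∧ OmegaEq T (Zword x))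

/-- Membership in the monoid `SL_n`: elements of `M_n` satisfying the Lipschitz condition. -/
def SLnMem (T : Transducer n) : Prop := MnMem T ∧ SL3 T

/-- Membership in the monoid `SO_n`: elements of `M_n` all of whose states induce injective
maps with clopen image. -/
def SOnMem (T : Transducer n) : Prop :=
  MnMem T ∧ ∀ q : T.Q, Function.Injective (hmap T q) ∧ IsClopen (Set.range (hmap T q))

/-- Membership in the group `O_n`: invertible elements of `SO_n` (with inverse in `SO_n`);
equality in `M_n` is ω-equality. -/
def OnMem (T : Transducer n) : Prop :=
  SOnMem T ∧ ∃ U : Transducer n, SOnMem U ∧ OmegaEq (mulT T U) oneT ∧ OmegaEq (mulT U T) oneT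

/-- Membership in the group `L_n = O_n ∩ SL_n`. -/
def LnMem (T : Transducer n) : Prop := OnMem T ∧ SL3 T

/-- Membership in the monoid `\widetilde{P}_n` of weakly minimal, synchronous, strongly
synchronizing core transducers. -/
def PtildeMem (T : Transducer n) : Prop :=
  CircuitsNonempty T ∧ StronglySync T ∧ IsCore T ∧ Synchronous T ∧ WeaklyMinimal T

/-- The product in `\widetilde{P}_n`: take the product transducer, identify ω-equivalent
states and take the core. -/
noncomputable def ptildeMul (P R : Transducer n) : Transducer n :=
  coreT (quotT (prodT P R))

/-- An annotation of (a strongly synchronizing core transducer satisfying the Lipschitz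
condition) `T`. -/
def Annotation (T : Transducer n) (α : T.Q → ℤ) : Prop :=
  ∀ (q : T.Q) (Γ : Word n),
    α (dsts T Γ q) = α q + ((outs T Γ q).length : ℤ) - (Γ.length : ℤ)

/-! ### The two-sided full shift -/

/-- The space of bi-infinite sequences over the alphabet `A n`. -/
abbrev FullShift (n : ℕ) : Type := ℤ → A n

/-- The `i`-th power of the shift map: `(shiftZ i x) j = x (j - i)`.
The shift `σ` itself is `shiftZ 1`. -/
def shiftZ (i : ℤ) (x : FullShift n) : FullShift n := fun j => x (j - i)

/-- The monoid of endomorphisms of the shift dynamical system: continuous maps on the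
space of bi-infinite sequences commuting with the shift. -/
def EndShift (n : ℕ) : Type :=
  {f : FullShift n → FullShift n // Continuous f ∧ ∀ x, f (shiftZ 1 x) = shiftZ 1 (f x)}

/-- The group of automorphisms of the shift dynamical system: homeomorphisms of the
space of bi-infinite sequences commuting with the shift. -/
def AutShift (n : ℕ) : Type :=
  {f : FullShift n → FullShift n // Continuous f ∧ (∀ x, f (shiftZ 1 x) = shiftZ 1 (f x)) ∧
    ∃ g : FullShift n → FullShift n, Continuous g ∧ (∀ x, g (f x) = x) ∧ ∀ x, f (g x) = x}

/-- The window `x_{i-k} … x_{i-1}` of a bi-infinite sequence. -/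
def window (x : FullShift n) (i : ℤ) (k : ℕ) : Word n :=
  (List.range k).map fun j => x (i - (k : ℤ) + (j : ℤ))

/-- The state of `L` forced by the window `x_{i-k} … x_{i-1}`. -/
noncomputable def forced (L : Transducer n) (k : ℕ) (x : FullShift n) (i : ℤ) : L.Q :=
  dsts L (window x i k) (Classical.choice L.ne)

/-- The output word written while processing the letter `x i`. -/
noncomputable def outAt (L : Transducer n) (k : ℕ) (x : FullShift n) (i : ℤ) : Word n :=
  L.out (x i) (forced L k x i)

/-- The defining specification of the map `(L, α) : X_n^ℤ → X_n^ℤ` induced by an annotated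
transducer: for each index `i`, with `q` the state forced by `x_{i-k} … x_{i-1}` and
`w = λ(x_i, q)`, the word `w` occupies the coordinates `i + α q, …, i + α q + |w| - 1`
of the image sequence `y`. -/
def SpecAt (L : Transducer n) (α : L.Q → ℤ) (k : ℕ) (x y : FullShift n) : Prop :=
  ∀ (i : ℤ) (j : ℕ), j < (outAt L k x i).length →
    y (i + α (forced L k x i) + (j : ℤ)) = (outAt L k x i).getD j default

/-- The map `(L, α) : X_n^ℤ → X_n^ℤ` induced by an annotated transducer. -/
noncomputable def inducedMap (L : Transducer n) (α : L.Q → ℤ) (k : ℕ) :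
    FullShift n → FullShift n := fun x m => by
  classical
  exact if h : ∃ p : ℤ × ℕ, p.2 < (outAt L k x p.1).length ∧
      p.1 + α (forced L k x p.1) + (p.2 : ℤ) = m then
    (outAt L k x h.choose.1).getD h.choose.2 default
  else default

/-- The map `κ` from the states of `T` to the states of its minimal representative. -/
noncomputable def kappa (T : Transducer n) (q : T.Q) : (minRep T).Q := by
  classical
  exact Quotient.mk (omegaSetoid (coreT (removeIncomplete T)))
    (if h : CoreStateE (removeIncomplete T) q then
      (⟨q, h⟩ : (coreT (removeIncomplete T)).Q)
    else Classical.choice (coreT (removeIncomplete T)).ne)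

/-- The annotation `\overline{α + β}` of the product `LM` in `SL_n`: its value at the
state `κ (s, t)` is `α s + β t + |Λ(ε, (s,t))|`, the extent of incomplete response being
computed in `core (L * M)`. -/
noncomputable def annProd (L M : Transducer n) (α : L.Q → ℤ) (β : M.Q → ℤ) :
    (mulT L M).Q → ℤ := fun c =>
  α (Quotient.out c).1.1.1 + β (Quotient.out c).1.1.2 +
    (extentLen (coreT (prodT L M)) (Quotient.out c).1 : ℤ)

/-- The set `ASL_n` of annotated transducers: pairs of a transducer and an integer-valued
function on its states. -/
def ASLPair (n : ℕ) := Σ T : Transducer n, T.Q → ℤ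

/-- Membership in `ASL_n`: either the transducer is in `SL_n` with no states of incomplete
response and the function is an annotation of it, or it is a degenerate `Z_a` for a letter
`a` (whose `annotation ∞` we model by allowing an arbitrary function). -/
def ASLMem (p : ASLPair n) : Prop :=
  (SLnMem p.1 ∧ NoIncomplete p.1 ∧ Annotation p.1 p.2) ∨ ∃ a : A n, OmegaEq p.1 (Zword [a])

/-- Equality in `ASL_n`: ω-equality of the transducers matching up the annotations, with
the two elements possibly both being the degenerate `(Z_a, ∞)` for the same letter `a`. -/
def ASLEq (p q : ASLPair n) : Prop :=
  (∃ f : p.1.Q ≃ q.1.Q, (∀ s, hmap p.1 s = hmap q.1 (f s)) ∧ ∀ s, q.2 (f s) = p.2 s) ∨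
    ∃ a : A n, OmegaEq p.1 (Zword [a]) ∧ OmegaEq q.1 (Zword [a])

/-- The product on `ASL_n`: `(L, α)(M, β) = (LM, \overline{α + β})`. -/
noncomputable def ASLmul (p q : ASLPair n) : ASLPair n :=
  ⟨mulT p.1 q.1, annProd p.1 q.1 p.2 q.2⟩

/-- The identity `(1, 0)` of `ASL_n`. -/
def ASLone : ASLPair n := ⟨oneT, fun _ => 0⟩

/-- Membership in `AL_n`: annotated elements of `L_n`. -/
def ALMem (p : ASLPair n) : Prop := LnMem p.1 ∧ Annotation p.1 p.2

/-- The element `([P], α)` of `ASL_n` with `α ((q) κ) = i + |Λ(ε, q)|`, associated to the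
endomorphism `σ^i ∘ f_P`. -/
noncomputable def phiPair (P : Transducer n) (i : ℤ) : ASLPair n :=
  ⟨minRep P, fun c => i + (extentLen P (Quotient.out c).1 : ℤ)⟩

/-- The unique state at the base of a circuit labelled `Γ` (junk value if there is none). -/
noncomputable def qcirc (T : Transducer n) (Γ : Word n) : T.Q := by
  classical
  exact if h : ∃ q, dsts T Γ q = q then h.choose else Classical.choice T.ne

/-- The prime root of a word: the prime word of which `w` is a power
(junk value `w` if there is none). -/
noncomputable def primeRoot (w : Word n) : Word n := by
  classical
  exact if h : ∃ u : Word n, IsPrime u ∧ ∃ k, w = (List.replicate k u).flatten then h.choose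
  else w

/-- The action of `T ∈ M_n` on (rotation classes of) prime words: `Γ` is sent to the prime
word of which `λ(Γ, q_Γ)` is a power, where `q_Γ` is the unique state with a circuit
labelled `Γ` based at it. -/
noncomputable def PiAct (T : Transducer n) (Γ : Word n) : Word n :=
  primeRoot (outs T Γ (qcirc T Γ))

/-- The cylinder set of one-sided infinite sequences with prefix `ν`. -/
def Cyl (ν : Word n) : Set (ℕ → A n) :=
  {x | ∀ (j : ℕ) (h : j < ν.length), x j = ν.get ⟨j, h⟩}

/-- `m_q = |B(q)|`: the least cardinality of a finite set of words whose cylinders are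
contained in, and together cover, the image of `h_q`. -/
noncomputable def mq (T : Transducer n) (q : T.Q) : ℕ :=
  sInf {m : ℕ | ∃ S : Finset (Word n), S.card = m ∧
    (∀ ν ∈ S, Cyl ν ⊆ Set.range (hmap T q)) ∧
    (⋃ ν ∈ S, Cyl ν) = Set.range (hmap T q)}

/-- The signature homomorphism `sig : O_n → (ℤ/(n-1))^×`, as an element of `ℤ/(n-1)`
(for our alphabet of size `n + 2`, the modulus is `n + 1`). -/
noncomputable def sigT (T : Transducer n) : ZMod (n + 1) :=
  (mq T (Classical.choice T.ne) : ZMod (n + 1))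



theorem dsts_append (T : Transducer n) (u v : Word n) (q : T.Q) :
    dsts T (u ++ v) q = dsts T v (dsts T u q) := by
  induction u generalizing q with
  | nil => rfl
  | cons a u ih => simp [dsts, ih]

theorem outs_append (T : Transducer n) (u v : Word n) (q : T.Q) :
    outs T (u ++ v) q = outs T u q ++ outs T v (dsts T u q) := by
  induction u generalizing q with
  | nil => simp [outs, dsts]
  | cons a u ih => simp [outs, dsts, ih]

/-- Let `T` be a strongly synchronizing core transducer satisfying the
Lipschitz condition SL3.  Then for all states `q, p` of `T` and all finite words `Γ, Δ`
with `π_T(Γ, q) = p` and `π_T(Δ, q) = p`, one has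
`|λ_T(Γ, q)| - |Γ| = |λ_T(Δ, q)| - |Δ|`: the "lag" along a path depends only on its
endpoints. -/
theorem lag_well_defined (n : ℕ) (T : Transducer n)
    (h0 : CircuitsNonempty T) (h1 : StronglySync T) (h2 : IsCore T) (h3 : SL3 T) :
    ∀ (q p : T.Q) (Γ Δ : Word n), dsts T Γ q = p → dsts T Δ q = p →
      ((outs T Γ q).length : ℤ) - (Γ.length : ℤ) =
        ((outs T Δ q).length : ℤ) - (Δ.length : ℤ) := by
  intro q p Γ Δ hΓ hΔ
  obtain ⟨k, w, hs, hl, hforce⟩ := h2 q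
  have hcΓ : dsts T (Γ ++ w) q = q := by rw [dsts_append, hΓ, hforce]
  have hcΔ : dsts T (Δ ++ w) q = q := by rw [dsts_append, hΔ, hforce]
  have e1 := h3 q (Γ ++ w) hcΓ
  have e2 := h3 q (Δ ++ w) hcΔ
  rw [outs_append, hΓ] at e1
  rw [outs_append, hΔ] at e2
  simp only [List.length_append] at e1 e2
  omega

end ShiftPaper
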